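/- There is no finitely supported injection from A × A (with the componentwise action of finitary permutations) into the set A of atoms. -/

import Mathlib

open Pointwise

/-- The group of finitary permutations of the set `A` of atoms: bijections of `A`
whose set of non-fixed points is finite. -/
def FinPerm (A : Type*) : Subgroup (Equiv.Perm A) where
  carrier := {π : Equiv.Perm A | {a : A | π a ≠ a}.Finite}
  one_mem' := by simp
  mul_mem' := by
    intro π σ hπ hσ
    refine Set.Finite.subset (Set.Finite.union hπ hσ) ?_
    intro a ha
    simp only [Set.mem_setOf_eq, Set.mem_union] at *
    by_contra h
    push_neg at h
    obtain ⟨h1, h2⟩ := h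
    exact ha (by rw [Equiv.Perm.mul_apply, h2, h1])
  inv_mem' := by
    intro π hπ
    refine Set.Finite.subset hπ ?_
    intro a ha
    simp only [Set.mem_setOf_eq] at *
    intro h
    exact ha (π.injective (by rw [← Equiv.Perm.mul_apply, mul_inv_cancel, Equiv.Perm.one_apply, h]))

/-- An element `x` is finitely supported if some finite set of atoms supports it. -/
def FinSupp (A : Type*) {X : Type*} [SMul (FinPerm A) X] (x : X) : Prop :=
  ∃ S : Finset A, MulAction.Supports (FinPerm A) (S : Set A) x

/-- The least support of an element: the intersection of all finite sets of atoms
supporting it. -/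
def supp (A : Type*) {X : Type*} [SMul (FinPerm A) X] (x : X) : Set A :=
  ⋂₀ {S : Set A | S.Finite ∧ MulAction.Supports (FinPerm A) S x}

/-- A set `S` of atoms supports a function `f` if `f (π • x) = π • f x` for every
finitary permutation `π` fixing `S` pointwise. -/
def SuppFun (A : Type*) {X Y : Type*} [SMul (FinPerm A) X] [SMul (FinPerm A) Y]
    (S : Set A) (f : X → Y) : Prop :=
  ∀ π : FinPerm A, (∀ a ∈ S, π • a = a) → ∀ x, f (π • x) = π • f x

/-- A set `S` of atoms supports a function `f` between the subsets `X` and `Y` if, for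
every finitary permutation `π` fixing `S` pointwise and every `x ∈ X`, we have
`π • x ∈ X`, `π • f x ∈ Y` and `f (π • x) = π • f x`. -/
def SuppFunOn (A : Type*) {U V : Type*} [SMul (FinPerm A) U] [SMul (FinPerm A) V]
    (S : Set A) (X : Set U) (Y : Set V) (f : U → V) : Prop :=
  ∀ π : FinPerm A, (∀ a ∈ S, π • a = a) →
    ∀ x ∈ X, π • x ∈ X ∧ π • f x ∈ Y ∧ f (π • x) = π • f x

/-- `℘_fs(X)`: the finitely supported subsets of the set `X`. -/
def Pfs (A : Type*) {U : Type*} [SMul (FinPerm A) U] (X : Set U) : Set (Set U) :=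
  {Z : Set U | Z ⊆ X ∧ FinSupp A Z}


/-! An injection `f` supported by `S` is fixed by a permutation `π` fixing `S` only where its
argument is: `π • f p = f p` forces `f (π • p) = f p`, hence `π • p = p`. Now take distinct atoms
`a, b, c` outside `S`. If `f (a, b)` is neither `a` nor `b`, the transposition of `a` and `b` fixes
it but not `(a, b)`; if it is `a`, the transposition of `b` and `c` does the same, and if it is
`b`, that of `a` and `c`. -/

namespace FinPerm

variable {A : Type*} [DecidableEq A]

def swap (x y : A) : FinPerm A :=
  ⟨Equiv.swap x y, (Set.toFinite {x, y}).subset fun _ h ↦ by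
    simp [(Equiv.swap_apply_ne_self_iff.mp h).2]⟩

@[simp]
theorem swap_smul (x y a : A) : swap x y • a = Equiv.swap x y a := rfl

theorem swap_smul_of_notMem {S : Set A} {x y : A} (hx : x ∉ S) (hy : y ∉ S) :
    ∀ a ∈ S, swap x y • a = a := fun _ ha ↦
  Equiv.swap_apply_of_ne_of_ne (ne_of_mem_of_not_mem ha hx) (ne_of_mem_of_not_mem ha hy)

end FinPerm

theorem SuppFun.smul_eq_of_smul_apply_eq {A X Y : Type*} [SMul (FinPerm A) X]
    [SMul (FinPerm A) Y] {S : Set A} {f : X → Y} (hf : SuppFun A S f)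
    (hinj : Function.Injective f) {π : FinPerm A} (hπ : ∀ a ∈ S, π • a = a) {p : X}
    (h : π • f p = f p) : π • p = p :=
  hinj ((hf π hπ p).trans h)

/-- there is no finitely supported injection from `A × A` (with the
componentwise action of finitary permutations) into the set `A` of atoms. -/
theorem no_finSupp_injection_atomPairs_to_atoms {A : Type*} [Infinite A] :
    ¬ ∃ (f : A × A → A) (S : Finset A),
      Function.Injective f ∧ SuppFun A (S : Set A) f := by
  classical
  rintro ⟨f, S, hinj, hf⟩
  obtain ⟨a, ha⟩ := Infinite.exists_notMem_finset S
  obtain ⟨b, hb⟩ := Infinite.exists_notMem_finset (insert a S)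
  obtain ⟨c, hc⟩ := Infinite.exists_notMem_finset (insert b (insert a S))
  simp only [Finset.mem_insert, not_or] at hb hc
  obtain ⟨hba, hbS⟩ := hb
  obtain ⟨hcb, hca, hcS⟩ := hc
  have swap_fixes_ab {x y : A} (hx : x ∉ S) (hy : y ∉ S)
      (h : Equiv.swap x y (f (a, b)) = f (a, b)) : FinPerm.swap x y • (a, b) = (a, b) :=
    hf.smul_eq_of_smul_apply_eq hinj (FinPerm.swap_smul_of_notMem hx hy) h
  by_cases hfa : f (a, b) = a
  · have hbc := swap_fixes_ab hbS hcS <| by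
      rw [hfa, Equiv.swap_apply_of_ne_of_ne (Ne.symm hba) (Ne.symm hca)]
    simp [hcb] at hbc
  by_cases hfb : f (a, b) = b
  · have hac := swap_fixes_ab ha hcS <| by
      rw [hfb, Equiv.swap_apply_of_ne_of_ne hba (Ne.symm hcb)]
    simp [hca] at hac
  have hab := swap_fixes_ab ha hbS (Equiv.swap_apply_of_ne_of_ne hfa hfb)
  simp [hba] at hab
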